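/- arXiv:1109.4918 — 5 statements merged into one kernel-verified Lean document; each statement's English description precedes it below -/
import Mathlib

section
/- Let G=(V,E) be a connected graph of finite diameter (loops and infinite vertex degrees allowed) and let f : V → ℝ be bounded. Then there exists a constant c_f ∈ ℝ such that for every bounded function u₀ : V → ℝ, if (u_n) is the sequence of tug-of-war game values with terminal payoff u₀ and running payoff f, then the sequence of functions (u_n − n·c_f) is uniformly bounded, i.e. sup_{n≥0} sup_{x∈V} |u_n(x) − n·c_f| < ∞. -/
open Set Filter Topology
open scoped ENNReal Classical

/-!
The one-round operator `T` is monotone and commutes with adding constants, hence is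
non-expansive for the sup norm: the terminal payoff moves `u_n` by at most `sup |u₀|`, so it
suffices to take `u₀ = 0`. Then `S_n = sup u_n` is subadditive and `I_n = inf u_n` is
superadditive, so some `c` satisfies `I_n ≤ n c ≤ S_n`, and it remains to bound the oscillation
`S_n - I_n`. Infima are suprema for the payoff `-f`, because `u_n` for `-f` is `-u_n`.

For the oscillation, since `T v (x) ≤ (sup v + v z) / 2 + M` for every neighbour `z` of `x`,
following a walk of length `k ≤ D` from `x` to a point `y` where `u_n` is small pulls
`u_{n+D}(x)` at least `2^{-D} (S_n - u_n(y))` below `S_n + D M`. With the symmetric bound for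
`I_{n+D}` this gives `S_{n+D} - I_{n+D} ≤ (1 - 2^{1-D}) (S_n - I_n) + 2 D M`, which keeps the
oscillation below `2^D D M`.
-/

/-- Tug-of-war game values on the graph with adjacency relation `adj`, running payoff `f`
and terminal payoff `u₀`:
`u_{n+1}(x) = (1/2)(sup_{y∼x} u_n(y) + inf_{y∼x} u_n(y)) + f(x)`. -/
noncomputable def gameVal {V : Type*} (adj : V → V → Prop) (f u₀ : V → ℝ) : ℕ → V → ℝ
  | 0 => u₀
  | n + 1 => fun x =>
      (sSup (gameVal adj f u₀ n '' {y | adj x y}) +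
        sInf (gameVal adj f u₀ n '' {y | adj x y})) / 2 + f x

/-- `c` is Player I's long term advantage for running payoff `f`: the game values with
terminal payoff `0` satisfy that `(u_n - n·c)` is uniformly bounded. -/
def IsLTA {V : Type*} (adj : V → V → Prop) (f : V → ℝ) (c : ℝ) : Prop :=
  ∃ C : ℝ, ∀ (n : ℕ) (x : V), |gameVal adj f (fun _ => (0:ℝ)) n x - n * c| ≤ C

/-- `ReachesIn adj n x y`: there is a walk of length exactly `n` from `x` to `y`. -/
def ReachesIn {V : Type*} (adj : V → V → Prop) : ℕ → V → V → Prop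
  | 0 => fun x y => x = y
  | n + 1 => fun x y => ∃ z, adj x z ∧ ReachesIn adj n z y

theorem Subadditive.apply_succ_mul_le {u : ℕ → ℝ} (h : Subadditive u) (k n : ℕ) :
    u ((k + 1) * n) ≤ (k + 1) * u n := by
  have := h.apply_mul_add_le k n n
  rw [add_mul, one_mul]
  linarith

theorem Subadditive.apply_zero_nonneg {u : ℕ → ℝ} (h : Subadditive u) : 0 ≤ u 0 := by
  have := h 0 0
  simp only [add_zero] at this
  linarith

theorem Subadditive.exists_neg_le_mul_le {a b : ℕ → ℝ} (ha : Subadditive a) (hb : Subadditive b)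
    (hab : ∀ n, 0 ≤ a n + b n) : ∃ c : ℝ, ∀ n : ℕ, -b n ≤ n * c ∧ n * c ≤ a n := by
  have cross (m n : ℕ) : -b (n + 1) / (n + 1) ≤ a (m + 1) / (m + 1) := by
    have hmn := hab ((m + 1) * (n + 1))
    have ha' := ha.apply_succ_mul_le n (m + 1)
    have hb' := hb.apply_succ_mul_le m (n + 1)
    rw [mul_comm] at ha'
    rw [div_le_div_iff₀ (by positivity) (by positivity)]
    nlinarith
  refine ⟨⨅ m : ℕ, a (m + 1) / (m + 1), fun n => ?_⟩
  have hbdd : BddBelow (range fun m : ℕ => a (m + 1) / (m + 1)) :=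
    ⟨-b 1 / 1, by rintro _ ⟨m, rfl⟩; simpa using cross m 0⟩
  cases n with
  | zero => simpa using ⟨hb.apply_zero_nonneg, ha.apply_zero_nonneg⟩
  | succ n =>
    push_cast
    constructor
    · rw [← div_le_iff₀' (by positivity), neg_div]
      exact le_ciInf fun m => by simpa [neg_div] using cross m n
    · rw [← le_div_iff₀' (by positivity)]
      exact ciInf_le hbdd n

section TugStep

variable {V : Type*} {adj : V → V → Prop} {f u v : V → ℝ}

theorem bddBelow_range_of_abs_le {B : ℝ} (h : ∀ x, |u x| ≤ B) : BddBelow (range u) :=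
  ⟨-B, forall_mem_range.2 fun x => neg_le_of_abs_le (h x)⟩

theorem bddAbove_range_of_abs_le {B : ℝ} (h : ∀ x, |u x| ≤ B) : BddAbove (range u) :=
  ⟨B, forall_mem_range.2 fun x => le_of_abs_le (h x)⟩

variable (adj f) in
noncomputable def tugStep (u : V → ℝ) (x : V) : ℝ :=
  (sSup (u '' {y | adj x y}) + sInf (u '' {y | adj x y})) / 2 + f x

variable (adj f) in
theorem gameVal_succ (u₀ : V → ℝ) (n : ℕ) :
    gameVal adj f u₀ (n + 1) = tugStep adj f (gameVal adj f u₀ n) :=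
  rfl

theorem gameVal_add (u₀ : V → ℝ) (m n : ℕ) :
    gameVal adj f u₀ (m + n) = gameVal adj f (gameVal adj f u₀ m) n := by
  induction n with
  | zero => rfl
  | succ n ih => rw [← add_assoc, gameVal_succ, gameVal_succ, ih]

theorem tugStep_neg : tugStep adj (-f) (-u) = -tugStep adj f u := by
  ext x
  have hneg : (-u) '' {y | adj x y} = -(u '' {y | adj x y}) := by
    rw [← image_neg_eq_neg, image_image]
    rfl
  rw [tugStep, hneg, Real.sSup_neg, Real.sInf_neg, Pi.neg_apply, Pi.neg_apply, tugStep]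
  ring

theorem gameVal_neg (u₀ : V → ℝ) (n : ℕ) : gameVal adj (-f) (-u₀) n = -gameVal adj f u₀ n := by
  induction n with
  | zero => rfl
  | succ n ih => rw [gameVal_succ, gameVal_succ, ih, tugStep_neg]

theorem tugStep_le_of_adj {x z : V} {b : ℝ} (hxz : adj x z) (hu : BddBelow (range u))
    (hb : ∀ y, u y ≤ b) : tugStep adj f u x ≤ (b + u z) / 2 + f x := by
  have hsup : sSup (u '' {y | adj x y}) ≤ b :=
    csSup_le ⟨u z, mem_image_of_mem u hxz⟩ (forall_mem_image.2 fun y _ => hb y)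
  have hinf : sInf (u '' {y | adj x y}) ≤ u z :=
    csInf_le (hu.mono (image_subset_range _ _)) (mem_image_of_mem u hxz)
  rw [tugStep]
  linarith

variable (hnbr : ∀ x, ∃ y, adj x y)
include hnbr

theorem tugStep_le_add {t : ℝ} (hu : BddBelow (range u)) (hv : BddAbove (range v))
    (h : ∀ x, u x ≤ v x + t) (x : V) : tugStep adj f u x ≤ tugStep adj f v x + t := by
  obtain ⟨z, hxz⟩ := hnbr x
  have hsup : sSup (u '' {y | adj x y}) ≤ sSup (v '' {y | adj x y}) + t :=
    csSup_le ⟨u z, mem_image_of_mem u hxz⟩ <| forall_mem_image.2 fun y hy =>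
      (h y).trans <| add_le_add_left (le_csSup (hv.mono (image_subset_range _ _))
        (mem_image_of_mem v hy)) t
  have hinf : sInf (u '' {y | adj x y}) - t ≤ sInf (v '' {y | adj x y}) :=
    le_csInf ⟨v z, mem_image_of_mem v hxz⟩ <| forall_mem_image.2 fun y hy =>
      sub_le_iff_le_add.2 <| (csInf_le (hu.mono (image_subset_range _ _))
        (mem_image_of_mem u hy)).trans (h y)
  rw [tugStep, tugStep]
  linarith

theorem tugStep_const (c : ℝ) : tugStep adj f (fun _ => c) = fun x => c + f x := by
  ext x
  rw [tugStep, Nonempty.image_const (s := {y | adj x y}) (hnbr x), csSup_singleton,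
    csInf_singleton, add_self_div_two]

theorem abs_tugStep_le {B M : ℝ} (hf : ∀ x, |f x| ≤ M) (hu : ∀ x, |u x| ≤ B) (x : V) :
    |tugStep adj f u x| ≤ B + M := by
  have hzero : ∀ x : V, |(fun _ => (0 : ℝ)) x| ≤ 0 := fun _ => abs_zero.le
  have hup := tugStep_le_add hnbr (f := f) (t := B) (bddBelow_range_of_abs_le hu)
    (bddAbove_range_of_abs_le hzero) (fun y => (le_of_abs_le (hu y)).trans (zero_add B).ge) x
  have hlow := tugStep_le_add hnbr (f := f) (t := B) (bddBelow_range_of_abs_le hzero)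
    (bddAbove_range_of_abs_le hu) (fun y => neg_le_iff_add_nonneg.1 (neg_le_of_abs_le (hu y))) x
  rw [tugStep_const hnbr] at hup hlow
  have := abs_le.1 (hf x)
  rw [abs_le]
  constructor <;> linarith

theorem abs_gameVal_le {u₀ : V → ℝ} {B M : ℝ} (hf : ∀ x, |f x| ≤ M) (hu₀ : ∀ x, |u₀ x| ≤ B)
    (n : ℕ) (x : V) : |gameVal adj f u₀ n x| ≤ B + n * M := by
  induction n generalizing x with
  | zero => simpa [gameVal] using hu₀ x
  | succ n ih =>
    rw [gameVal_succ, Nat.cast_succ, add_one_mul, ← add_assoc]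
    exact abs_tugStep_le hnbr hf ih x

theorem gameVal_le_add {u₀ v₀ : V → ℝ} {M Bu Bv t : ℝ} (hf : ∀ x, |f x| ≤ M)
    (hu₀ : ∀ x, |u₀ x| ≤ Bu) (hv₀ : ∀ x, |v₀ x| ≤ Bv) (h : ∀ x, u₀ x ≤ v₀ x + t) (n : ℕ)
    (x : V) : gameVal adj f u₀ n x ≤ gameVal adj f v₀ n x + t := by
  induction n generalizing x with
  | zero => exact h x
  | succ n ih =>
    exact tugStep_le_add hnbr (bddBelow_range_of_abs_le (abs_gameVal_le hnbr hf hu₀ n))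
      (bddAbove_range_of_abs_le (abs_gameVal_le hnbr hf hv₀ n)) ih x

theorem abs_gameVal_sub_le {u₀ v₀ : V → ℝ} {M Bu Bv t : ℝ} (hf : ∀ x, |f x| ≤ M)
    (hu₀ : ∀ x, |u₀ x| ≤ Bu) (hv₀ : ∀ x, |v₀ x| ≤ Bv) (h : ∀ x, |u₀ x - v₀ x| ≤ t) (n : ℕ)
    (x : V) : |gameVal adj f u₀ n x - gameVal adj f v₀ n x| ≤ t := by
  have hle := gameVal_le_add hnbr hf hu₀ hv₀ (fun y => by linarith [le_of_abs_le (h y)]) n x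
  have hge := gameVal_le_add hnbr hf hv₀ hu₀ (fun y => by linarith [neg_le_of_abs_le (h y)]) n x
  rw [abs_le]
  constructor <;> linarith

theorem gameVal_le_of_reachesIn {v : V → ℝ} {M B b : ℝ} (hf : ∀ x, |f x| ≤ M)
    (hv : ∀ x, |v x| ≤ B) (hb : ∀ x, v x ≤ b) {k : ℕ} {x y : V} (hk : ReachesIn adj k x y) :
    gameVal adj f v k x ≤ b + k * M - (b - v y) / 2 ^ k := by
  induction k generalizing x with
  | zero =>
    obtain rfl : x = y := hk
    simp [gameVal]
  | succ k ih =>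
    obtain ⟨z, hxz, hzy⟩ := hk
    have hle : ∀ w, gameVal adj f v k w ≤ b + k * M := fun w => by
      have := gameVal_le_add hnbr hf hv (v₀ := 0) (fun _ => abs_zero.le)
        (fun y => (hb y).trans (zero_add b).ge) k w
      linarith [le_of_abs_le (abs_gameVal_le hnbr hf (u₀ := 0) (fun _ => abs_zero.le) k w)]
    have hstep := tugStep_le_of_adj (f := f) hxz
      (bddBelow_range_of_abs_le (abs_gameVal_le hnbr hf hv k)) hle
    have hpow : (b - v y) / 2 ^ (k + 1) = (b - v y) / 2 ^ k / 2 := by rw [pow_succ, div_div]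
    rw [gameVal_succ, hpow, Nat.cast_succ]
    linarith [ih hzy, le_of_abs_le (hf x)]

end TugStep

section ZeroTerminal

variable {V : Type*} {adj : V → V → Prop} {f : V → ℝ}

variable (adj f) in
noncomputable def gameSup (n : ℕ) : ℝ :=
  ⨆ x, gameVal adj f 0 n x

theorem gameVal_neg_zero (n : ℕ) : gameVal adj (-f) 0 n = -gameVal adj f 0 n := by
  simpa using gameVal_neg (adj := adj) (f := f) 0 n

variable {M : ℝ} (hnbr : ∀ x, ∃ y, adj x y) (hf : ∀ x, |f x| ≤ M)
include hnbr hf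

theorem abs_gameVal_zero_le (n : ℕ) (x : V) : |gameVal adj f 0 n x| ≤ n * M := by
  simpa using abs_gameVal_le hnbr hf (u₀ := 0) (B := 0) (fun _ => abs_zero.le) n x

theorem gameVal_zero_le_gameSup (n : ℕ) (x : V) : gameVal adj f 0 n x ≤ gameSup adj f n :=
  le_ciSup (bddAbove_range_of_abs_le (abs_gameVal_zero_le hnbr hf n)) x

theorem gameVal_zero_add_le {m : ℕ} {t : ℝ} (h : ∀ x, gameVal adj f 0 m x ≤ t) (n : ℕ) (x : V) :
    gameVal adj f 0 (m + n) x ≤ gameVal adj f 0 n x + t := by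
  rw [gameVal_add]
  exact gameVal_le_add hnbr hf (v₀ := 0) (abs_gameVal_zero_le hnbr hf m) (fun _ => abs_zero.le)
    (fun y => (h y).trans (zero_add t).ge) n x

variable [Nonempty V]

theorem gameSup_le (n : ℕ) : gameSup adj f n ≤ n * M :=
  ciSup_le fun x => le_of_abs_le (abs_gameVal_zero_le hnbr hf n x)

theorem subadditive_gameSup : Subadditive (gameSup adj f) := fun m n =>
  ciSup_le fun x => (gameVal_zero_add_le hnbr hf (gameVal_zero_le_gameSup hnbr hf m) n x).trans
    (by linarith [gameVal_zero_le_gameSup hnbr hf n x])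

theorem gameSup_add_gameSup_neg_nonneg (n : ℕ) : 0 ≤ gameSup adj f n + gameSup adj (-f) n := by
  have hf' : ∀ x, |(-f) x| ≤ M := fun x => by simpa using hf x
  let x := Classical.arbitrary V
  have h := gameVal_zero_le_gameSup hnbr hf' n x
  rw [gameVal_neg_zero, Pi.neg_apply] at h
  linarith [gameVal_zero_le_gameSup hnbr hf n x]

theorem gameSup_add_le {D : ℕ} (hD : ∀ x y : V, ∃ k ≤ D, ReachesIn adj k x y) (n : ℕ) :
    gameSup adj f (n + D) ≤
      gameSup adj f n + D * M - (gameSup adj f n + gameSup adj (-f) n) / 2 ^ D := by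
  set S := gameSup adj f n
  have hwalk (x y : V) :
      gameVal adj f 0 (n + D) x ≤ S + D * M - (S - gameVal adj f 0 n y) / 2 ^ D := by
    obtain ⟨k, hkD, hk⟩ := hD x y
    obtain ⟨j, rfl⟩ : ∃ j, D = j + k := ⟨D - k, by omega⟩
    have hvb (w : V) : gameVal adj f 0 (j + n) w ≤ S + j * M := by
      linarith [gameVal_zero_le_gameSup hnbr hf (j + n) w, subadditive_gameSup hnbr hf j n,
        gameSup_le hnbr hf (f := f) j]
    have hvy := gameVal_zero_add_le hnbr hf
      (fun w => le_of_abs_le (abs_gameVal_zero_le hnbr hf j w)) n y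
    have hreach := gameVal_le_of_reachesIn hnbr hf (abs_gameVal_zero_le hnbr hf (j + n)) hvb hk
    have hSy := gameVal_zero_le_gameSup hnbr hf n y
    have hdiv₁ : (S - gameVal adj f 0 n y) / 2 ^ (j + k) ≤ (S - gameVal adj f 0 n y) / 2 ^ k :=
      div_le_div_of_nonneg_left (sub_nonneg.2 hSy) (by positivity)
        (pow_le_pow_right₀ one_le_two (Nat.le_add_left k j))
    have hdiv₂ : (S - gameVal adj f 0 n y) / 2 ^ k ≤
        (S + j * M - gameVal adj f 0 (j + n) y) / 2 ^ k :=
      div_le_div_of_nonneg_right (by linarith) (by positivity)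
    rw [show n + (j + k) = j + n + k by ring, gameVal_add]
    push_cast
    linarith
  have hy (y : V) : S - gameVal adj f 0 n y ≤ (S + D * M - gameSup adj f (n + D)) * 2 ^ D := by
    have hsup : gameSup adj f (n + D) ≤ _ := ciSup_le fun x => hwalk x y
    rw [← div_le_iff₀ (by positivity)]
    linarith
  have hneg : gameSup adj (-f) n ≤ (S + D * M - gameSup adj f (n + D)) * 2 ^ D - S :=
    ciSup_le fun y => by
      rw [gameVal_neg_zero, Pi.neg_apply]
      linarith [hy y]
  have hdiv : (S + gameSup adj (-f) n) / 2 ^ D ≤ S + D * M - gameSup adj f (n + D) := by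
    rw [div_le_iff₀ (by positivity)]
    linarith
  linarith

theorem gameSup_add_gameSup_neg_le {D : ℕ} (hD₀ : 0 < D)
    (hD : ∀ x y : V, ∃ k ≤ D, ReachesIn adj k x y) (n : ℕ) :
    gameSup adj f n + gameSup adj (-f) n ≤ 2 ^ D * D * M := by
  have hf' : ∀ x, |(-f) x| ≤ M := fun x => by simpa using hf x
  have hM : 0 ≤ M := (abs_nonneg _).trans (hf (Classical.arbitrary V))
  have htwo : (2 : ℝ) ≤ 2 ^ D := le_self_pow₀ one_le_two hD₀.ne'
  induction n using Nat.strong_induction_on with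
  | _ n ih =>
    rcases lt_or_ge n D with hn | hn
    · have hnD : (n : ℝ) * M ≤ D * M := mul_le_mul_of_nonneg_right (by exact_mod_cast hn.le) hM
      have hDM : 2 * (D * M) ≤ 2 ^ D * (D * M) := mul_le_mul_of_nonneg_right htwo (by positivity)
      linarith [gameSup_le hnbr hf n, gameSup_le hnbr hf' n]
    · obtain ⟨m, rfl⟩ : ∃ m, n = m + D := ⟨n - D, by omega⟩
      have hS := gameSup_add_le hnbr hf hD m
      have hS' := gameSup_add_le hnbr hf' hD m
      rw [neg_neg, add_comm (gameSup adj (-f) m) (gameSup adj f m)] at hS'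
      have hq : 0 ≤ 1 - 2 / (2 : ℝ) ^ D := sub_nonneg.2 ((div_le_one (by positivity)).2 htwo)
      calc gameSup adj f (m + D) + gameSup adj (-f) (m + D)
          ≤ gameSup adj f m + gameSup adj (-f) m + 2 * D * M -
              2 * ((gameSup adj f m + gameSup adj (-f) m) / 2 ^ D) := by linarith
        _ = (1 - 2 / 2 ^ D) * (gameSup adj f m + gameSup adj (-f) m) + 2 * D * M := by ring
        _ ≤ (1 - 2 / 2 ^ D) * (2 ^ D * D * M) + 2 * D * M := by gcongr; exact ih m (by omega)
        _ = 2 ^ D * D * M := by field_simp; ring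

theorem exists_isLTA (hD : ∃ D : ℕ, ∀ x y : V, ∃ k ≤ D, ReachesIn adj k x y) :
    ∃ c, IsLTA adj f c := by
  obtain ⟨D, hD⟩ := hD
  have hD' (x y : V) : ∃ k ≤ D + 1, ReachesIn adj k x y :=
    (hD x y).imp fun _ ⟨hk, h⟩ => ⟨hk.trans D.le_succ, h⟩
  have hf' : ∀ x, |(-f) x| ≤ M := fun x => by simpa using hf x
  obtain ⟨c, hc⟩ := (subadditive_gameSup hnbr hf).exists_neg_le_mul_le
    (subadditive_gameSup hnbr hf') (gameSup_add_gameSup_neg_nonneg hnbr hf)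
  refine ⟨c, 2 ^ (D + 1) * (D + 1 : ℕ) * M, fun n x => ?_⟩
  have hosc := gameSup_add_gameSup_neg_le hnbr hf (by omega) hD' n
  have hup := gameVal_zero_le_gameSup hnbr hf n x
  have hlow := gameVal_zero_le_gameSup hnbr hf' n x
  rw [gameVal_neg_zero, Pi.neg_apply] at hlow
  change |gameVal adj f 0 n x - n * c| ≤ _
  rw [abs_le]
  constructor <;> linarith [(hc n).1, (hc n).2]

end ZeroTerminal

theorem IsLTA.exists_abs_gameVal_sub_le {V : Type*} {adj : V → V → Prop} {f u₀ : V → ℝ} {c : ℝ}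
    (hc : IsLTA adj f c) (hnbr : ∀ x, ∃ y, adj x y) (hf : ∃ M, ∀ x, |f x| ≤ M)
    (hu₀ : ∃ B, ∀ x, |u₀ x| ≤ B) : ∃ C, ∀ (n : ℕ) (x : V), |gameVal adj f u₀ n x - n * c| ≤ C := by
  obtain ⟨C, hC⟩ := hc
  obtain ⟨M, hM⟩ := hf
  obtain ⟨B, hB⟩ := hu₀
  refine ⟨B + C, fun n x => ?_⟩
  have hclose := abs_gameVal_sub_le hnbr hM hB (v₀ := fun _ => 0) (fun _ => abs_zero.le)
    (fun y => by simpa using hB y) n x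
  calc |gameVal adj f u₀ n x - n * c|
      ≤ |gameVal adj f u₀ n x - gameVal adj f (fun _ => 0) n x| +
        |gameVal adj f (fun _ => 0) n x - n * c| := abs_sub_le _ _ _
    _ ≤ B + C := add_le_add hclose (hC n x)

theorem forall_not_adj_of_not_adj {V : Type*} {adj : V → V → Prop}
    (hconn : ∀ x y : V, ∃ k, ReachesIn adj k x y) {x₀ : V} (hx₀ : ∀ y, ¬adj x₀ y) (x y : V) :
    ¬adj x y := by
  obtain ⟨k, hk⟩ := hconn x₀ x
  cases k with
  | zero =>
    obtain rfl : x₀ = x := hk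
    exact hx₀ y
  | succ k =>
    obtain ⟨z, hz, -⟩ := hk
    exact fun _ => hx₀ z hz

theorem exists_abs_gameVal_le_of_forall_not_adj {V : Type*} {adj : V → V → Prop}
    {f u₀ : V → ℝ} (hadj : ∀ x y, ¬adj x y) (hf : ∃ M, ∀ x, |f x| ≤ M)
    (hu₀ : ∃ B, ∀ x, |u₀ x| ≤ B) : ∃ C, ∀ (n : ℕ) (x : V), |gameVal adj f u₀ n x| ≤ C := by
  obtain ⟨M, hM⟩ := hf
  obtain ⟨B, hB⟩ := hu₀
  refine ⟨max B M, fun n x => ?_⟩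
  cases n with
  | zero => exact (hB x).trans (le_max_left B M)
  | succ n =>
    -- `sSup ∅ = sInf ∅ = 0` in `ℝ`, so every later round pays just `f`.
    have hempty : {y | adj x y} = ∅ := eq_empty_of_forall_notMem (hadj x)
    rw [gameVal_succ, tugStep, hempty]
    simpa using (hM x).trans (le_max_right B M)

theorem tug_of_war_long_term_advantage_general {V : Type*} (adj : V → V → Prop)
    (hdiam : ∃ D : ℕ, ∀ x y : V, ∃ n ≤ D, ReachesIn adj n x y)
    (f : V → ℝ) (hf : ∃ M : ℝ, ∀ x, |f x| ≤ M) :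
    ∃ c : ℝ, ∀ u₀ : V → ℝ, (∃ M : ℝ, ∀ x, |u₀ x| ≤ M) →
      ∃ C : ℝ, ∀ (n : ℕ) (x : V), |gameVal adj f u₀ n x - n * c| ≤ C := by
  by_cases hnbr : ∀ x, ∃ y, adj x y
  · obtain ⟨M, hM⟩ := hf
    cases isEmpty_or_nonempty V
    · exact ⟨0, fun _ _ => ⟨0, fun _ x => isEmptyElim x⟩⟩
    obtain ⟨c, hc⟩ := exists_isLTA hnbr hM hdiam
    exact ⟨c, fun u₀ hu₀ => hc.exists_abs_gameVal_sub_le hnbr ⟨M, hM⟩ hu₀⟩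
  · push Not at hnbr
    obtain ⟨x₀, hx₀⟩ := hnbr
    obtain ⟨D, hD⟩ := hdiam
    have hadj := forall_not_adj_of_not_adj (fun x y => (hD x y).imp fun _ => And.right) hx₀
    refine ⟨0, fun u₀ hu₀ => ?_⟩
    simpa using exists_abs_gameVal_le_of_forall_not_adj hadj hf hu₀

/-- For any connected graph of finite diameter and any bounded running
payoff `f` there is a constant `c_f` such that for every bounded terminal payoff `u₀` the
sequence of game values satisfies that `(u_n − n·c_f)` is uniformly bounded. -/
theorem tug_of_war_long_term_advantage {V : Type*} (adj : V → V → Prop)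
    (hsymm : Symmetric adj)
    (hdiam : ∃ D : ℕ, ∀ x y : V, ∃ n ≤ D, ReachesIn adj n x y)
    (f : V → ℝ) (hf : ∃ M : ℝ, ∀ x, |f x| ≤ M) :
    ∃ c : ℝ, ∀ u₀ : V → ℝ, (∃ M : ℝ, ∀ x, |u₀ x| ≤ M) →
      ∃ C : ℝ, ∀ (n : ℕ) (x : V), |gameVal adj f u₀ n x - n * c| ≤ C :=
  tug_of_war_long_term_advantage_general adj hdiam f hf
end

section
/- Let G=(V,E) be a finite connected graph with a loop at each vertex, and let f, u₀ : V → ℝ be functions with c_f = 0. Then the sequence (u_n) of tug-of-war game values with terminal payoff u₀ and running payoff f converges (uniformly, since V is finite) to a function u : V → ℝ. -/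
open Set Filter Topology
open scoped ENNReal Classical

/-!
The tug-of-war operator `T u x = (max_{y∼x} u y + min_{y∼x} u y) / 2 + f x` is monotone and
commutes with constants, hence is `1`-Lipschitz for the sup metric, and `c_f = 0` makes every
orbit bounded. Loops rule out oscillation: if the largest one-step increment stayed above some
`A > 0`, then following, backwards in time, the minimisers of the previous values from a
near-maximal increment gives a chain along which the values drop by about `A` per step,
contradicting boundedness. Hence `‖u_{n+1} - u_n‖ → 0`, and a bounded asymptotically regular
orbit of a nonexpansive map of a proper space converges: its limit points are fixed points,
and the distance to a fixed point does not increase along the orbit.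
-/

theorem LipschitzWith.exists_tendsto_of_tendsto_dist_succ {X : Type*} [MetricSpace X]
    [ProperSpace X] {T : X → X} (hT : LipschitzWith 1 T) {x : ℕ → X}
    (hx : ∀ n, x (n + 1) = T (x n)) (hbdd : Bornology.IsBounded (range x))
    (hreg : Tendsto (fun n => dist (x (n + 1)) (x n)) atTop (𝓝 0)) :
    ∃ w, Tendsto x atTop (𝓝 w) := by
  obtain ⟨w, -, φ, hφ, hxφ⟩ :=
    hbdd.isCompact_closure.tendsto_subseq fun n => subset_closure (mem_range_self n)
  have hfix : T w = w := by
    have hT_lim : Tendsto (fun k => x (φ k + 1)) atTop (𝓝 (T w)) := by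
      simpa only [hx, Function.comp_def] using (hT.continuous.tendsto w).comp hxφ
    have hw_lim : Tendsto (fun k => x (φ k + 1)) atTop (𝓝 w) := by
      rw [tendsto_iff_dist_tendsto_zero] at hxφ ⊢
      refine squeeze_zero (fun _ => dist_nonneg) (fun k => dist_triangle _ (x (φ k)) w) ?_
      simpa using (hreg.comp hφ.tendsto_atTop).add hxφ
    exact tendsto_nhds_unique hT_lim hw_lim
  have hanti : Antitone fun n => dist (x n) w := antitone_nat_of_succ_le fun n => by
    simpa [hx, hfix] using hT.dist_le_mul (x n) w
  have hlim := tendsto_atTop_ciInf hanti ⟨0, by rintro _ ⟨n, rfl⟩; exact dist_nonneg⟩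
  have hinf : ⨅ n, dist (x n) w = 0 :=
    tendsto_nhds_unique (hlim.comp hφ.tendsto_atTop) (tendsto_iff_dist_tendsto_zero.1 hxφ)
  exact ⟨w, tendsto_iff_dist_tendsto_zero.2 (hinf ▸ hlim)⟩

theorem tendstoUniformly_of_tendsto_pi {ι V : Type*} [Fintype V] {F : ι → V → ℝ} {w : V → ℝ}
    {l : Filter ι} (h : Tendsto F l (𝓝 w)) : TendstoUniformly F w l :=
  Metric.tendstoUniformly_iff.2 fun ε hε => (Metric.tendsto_nhds.1 h ε hε).mono fun _ hn x =>
    (dist_comm _ _).trans_lt ((dist_le_pi_dist _ _ x).trans_lt hn)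

section SetImage

variable {V : Type*} {s : Set V} {u v : V → ℝ} {c : ℝ}

theorem sSup_image_le_sSup_image_add (hs : s.Nonempty) (hfin : s.Finite)
    (h : ∀ y ∈ s, u y ≤ v y + c) : sSup (u '' s) ≤ sSup (v '' s) + c :=
  csSup_le (hs.image u) fun _ ⟨y, hy, hyu⟩ => hyu ▸
    (h y hy).trans (add_le_add_left (le_csSup (hfin.image v).bddAbove (mem_image_of_mem v hy)) c)

theorem sInf_image_le_sInf_image_add (hs : s.Nonempty) (hfin : s.Finite)
    (h : ∀ y ∈ s, u y ≤ v y + c) : sInf (u '' s) ≤ sInf (v '' s) + c := by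
  suffices sInf (u '' s) - c ≤ sInf (v '' s) by linarith
  refine le_csInf (hs.image v) fun _ ⟨y, hy, hyv⟩ => hyv ▸ ?_
  linarith [h y hy, csInf_le (hfin.image u).bddBelow (mem_image_of_mem u hy)]

end SetImage

namespace TugOfWar

variable {V : Type*} {adj : V → V → Prop}

noncomputable def op (adj : V → V → Prop) (f u : V → ℝ) : V → ℝ := fun x =>
  (sSup (u '' {y | adj x y}) + sInf (u '' {y | adj x y})) / 2 + f x

theorem op_neg (f u : V → ℝ) : op adj (-f) (-u) = -op adj f u := by
  funext x
  have himage : (fun y => -u y) '' {y | adj x y} = -(u '' {y | adj x y}) := by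
    rw [← Set.image_neg_eq_neg, Set.image_image]
  simp only [op, Pi.neg_apply, himage, Real.sSup_neg, Real.sInf_neg]
  ring

section Finite

variable [Finite V]

theorem op_le_op_add (hne : ∀ x, ∃ y, adj x y) (f : V → ℝ) {u v : V → ℝ} {c : ℝ}
    (h : ∀ y, u y ≤ v y + c) (x : V) : op adj f u x ≤ op adj f v x + c := by
  have hsup := sSup_image_le_sSup_image_add (s := {y | adj x y}) (hne x) (toFinite _)
    fun y _ => h y
  have hinf := sInf_image_le_sInf_image_add (s := {y | adj x y}) (hne x) (toFinite _)
    fun y _ => h y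
  simp only [op]
  linarith

/-- The witness `y` is a minimiser of `u` over the neighbours of `x`; the loop at `x` gives the
second inequality. -/
theorem exists_increment_ge_of_op_increment_ge (hloops : ∀ x, adj x x) (f : V → ℝ)
    {u v : V → ℝ} {α δ : ℝ} (hvu : ∀ y, v y ≤ u y + α) {x : V}
    (hx : op adj f u x + α - δ ≤ op adj f v x) :
    ∃ y, u y + α - 2 * δ ≤ v y ∧ v y ≤ v x + 2 * δ := by
  have hN : {y | adj x y}.Nonempty := ⟨x, hloops x⟩
  obtain ⟨y, hy, hyu⟩ := hN.image u |>.csInf_mem ((toFinite _).image u)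
  have hsup := sSup_image_le_sSup_image_add hN (toFinite _) fun y _ => hvu y
  have hbdd : BddBelow (v '' {y | adj x y}) := ((toFinite _).image v).bddBelow
  have hvy := csInf_le hbdd (mem_image_of_mem v hy)
  have hvx := csInf_le hbdd (mem_image_of_mem v (hloops x))
  simp only [op] at hx
  exact ⟨y, by linarith, by linarith [hvu y]⟩

/-- Iterates `exists_increment_ge_of_op_increment_ge` backwards in time; the deficit `δ`
doubles at each step. -/
theorem exists_le_sub_of_increment_ge (hloops : ∀ x, adj x x) (f : V → ℝ) {u : ℕ → V → ℝ}
    (hu : ∀ n, u (n + 1) = op adj f (u n)) {α : ℝ} (hα : ∀ n y, u (n + 1) y ≤ u n y + α)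
    (j : ℕ) {δ : ℝ} {x : V} (hx : u j x + α - δ ≤ u (j + 1) x) :
    ∃ y, u 1 y ≤ u (j + 1) x - j * α + 3 * (2 ^ j - 1) * δ := by
  induction j generalizing δ x with
  | zero => exact ⟨x, by simp⟩
  | succ j ih =>
    obtain ⟨y, hy_incr, hy_le⟩ := exists_increment_ge_of_op_increment_ge hloops f (hα j)
      (x := x) (by rwa [← hu, ← hu])
    obtain ⟨z, hz⟩ := ih (δ := 2 * δ) (by linarith)
    refine ⟨z, ?_⟩
    push_cast
    rw [pow_succ]
    linarith

end Finite

section Fintype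

variable [Fintype V]

theorem lipschitzWith_op (hne : ∀ x, ∃ y, adj x y) (f : V → ℝ) : LipschitzWith 1 (op adj f) := by
  refine LipschitzWith.of_dist_le_mul fun u v => ?_
  rw [NNReal.coe_one, one_mul, dist_pi_le_iff dist_nonneg]
  intro x
  have huv : ∀ y, |u y - v y| ≤ dist u v := fun y => by
    simpa only [Real.dist_eq] using dist_le_pi_dist u v y
  have hle := op_le_op_add hne f (u := u) (v := v) (c := dist u v)
    (fun y => by linarith [(abs_le.1 (huv y)).2]) x
  have hge := op_le_op_add hne f (u := v) (v := u) (c := dist u v)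
    (fun y => by linarith [(abs_le.1 (huv y)).1]) x
  rw [Real.dist_eq, abs_le]
  constructor <;> linarith

theorem dist_gameVal_le (hne : ∀ x, ∃ y, adj x y) (f u₀ v₀ : V → ℝ) (n : ℕ) :
    dist (gameVal adj f u₀ n) (gameVal adj f v₀ n) ≤ dist u₀ v₀ := by
  induction n with
  | zero => rfl
  | succ n ih =>
    calc dist (gameVal adj f u₀ (n + 1)) (gameVal adj f v₀ (n + 1))
        ≤ 1 * dist (gameVal adj f u₀ n) (gameVal adj f v₀ n) :=
          (lipschitzWith_op hne f).dist_le_mul _ _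
      _ ≤ dist u₀ v₀ := by rw [one_mul]; exact ih

theorem _root_.IsLTA.isBounded_range_gameVal (hne : ∀ x, ∃ y, adj x y) {f : V → ℝ}
    (hc : IsLTA adj f 0) (u₀ : V → ℝ) : Bornology.IsBounded (range (gameVal adj f u₀)) := by
  obtain ⟨C, hC⟩ := hc
  have h₀ : Bornology.IsBounded (range (gameVal adj f fun _ => 0)) := by
    refine Bornology.forall_isBounded_image_eval_iff.1 fun x => ?_
    refine isBounded_iff_forall_norm_le.2 ⟨C, ?_⟩
    rintro _ ⟨_, ⟨n, rfl⟩, rfl⟩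
    simpa using hC n x
  refine (h₀.cthickening (δ := dist u₀ fun _ => 0)).subset ?_
  rintro _ ⟨n, rfl⟩
  exact Metric.mem_cthickening_of_dist_le _ _ _ _ (mem_range_self n) (dist_gameVal_le hne f _ _ n)

noncomputable def maxIncrement [Nonempty V] (u : ℕ → V → ℝ) (n : ℕ) : ℝ :=
  Finset.univ.sup' Finset.univ_nonempty fun x => u (n + 1) x - u n x

theorem le_add_maxIncrement [Nonempty V] (u : ℕ → V → ℝ) (n : ℕ) (x : V) :
    u (n + 1) x ≤ u n x + maxIncrement u n := by
  have := Finset.le_sup' (fun x => u (n + 1) x - u n x) (Finset.mem_univ x)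
  rw [maxIncrement]
  linarith

theorem exists_eq_add_maxIncrement [Nonempty V] (u : ℕ → V → ℝ) (n : ℕ) :
    ∃ x, u (n + 1) x = u n x + maxIncrement u n := by
  obtain ⟨x, -, hx⟩ :=
    Finset.exists_mem_eq_sup' Finset.univ_nonempty fun x => u (n + 1) x - u n x
  exact ⟨x, by rw [maxIncrement, hx]; ring⟩

theorem antitone_maxIncrement [Nonempty V] (hne : ∀ x, ∃ y, adj x y) (f : V → ℝ)
    {u : ℕ → V → ℝ} (hu : ∀ n, u (n + 1) = op adj f (u n)) : Antitone (maxIncrement u) :=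
  antitone_nat_of_succ_le fun n => Finset.sup'_le _ _ fun x _ => by
    have := op_le_op_add hne f (le_add_maxIncrement u n) x
    rw [← hu, ← hu] at this
    linarith

theorem eventually_increment_le (hloops : ∀ x, adj x x) (f : V → ℝ) {u : ℕ → V → ℝ}
    (hu : ∀ n, u (n + 1) = op adj f (u n)) (hbdd : Bornology.IsBounded (range u))
    {δ : ℝ} (hδ : 0 < δ) : ∀ᶠ n in atTop, ∀ x, u (n + 1) x ≤ u n x + δ := by
  rcases isEmpty_or_nonempty V with _ | _
  · exact Eventually.of_forall fun _ x => isEmptyElim x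
  obtain ⟨B, hB⟩ := isBounded_iff_forall_norm_le.1 hbdd
  have hB' : ∀ n x, |u n x| ≤ B := fun n x =>
    (norm_le_pi_norm (u n) x).trans (hB _ (mem_range_self n))
  set a := maxIncrement u
  have ha_anti : Antitone a := antitone_maxIncrement (fun x => ⟨x, hloops x⟩) f hu
  by_contra hfreq
  have hδa : ∀ n, δ ≤ a n := fun n => by
    obtain ⟨m, hm, hm'⟩ := frequently_atTop.1 (not_eventually.1 hfreq) n
    obtain ⟨x, hx⟩ := not_forall.1 hm'
    linarith [not_le.1 hx, le_add_maxIncrement u m x, ha_anti hm]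
  -- A chain of length `K` started at time `N + K` descends by almost `K δ > 2 B + 1`.
  obtain ⟨K, hK⟩ := exists_nat_gt ((2 * B + 1) / δ)
  set ε : ℝ := 1 / (3 * 2 ^ K) with hε_def
  have hε : 0 < ε := by positivity
  have hε_le : 3 * (2 ^ K - 1) * ε ≤ 1 := by
    rw [hε_def]
    field_simp
    linarith
  obtain ⟨N, hN⟩ : ∃ N, a N < a (N + K) + ε := by
    obtain ⟨N, hN⟩ := exists_lt_of_ciInf_lt (lt_add_of_pos_right (⨅ n, a n) hε)
    have hbdd_a : BddBelow (range a) := ⟨δ, by rintro _ ⟨n, rfl⟩; exact hδa n⟩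
    exact ⟨N, by linarith [ciInf_le hbdd_a (N + K)]⟩
  obtain ⟨x, hx⟩ := exists_eq_add_maxIncrement u (N + K)
  obtain ⟨y, hy⟩ := exists_le_sub_of_increment_ge hloops f (u := fun n => u (N + n))
    (fun n => hu (N + n)) (α := a N)
    (fun n y => (le_add_maxIncrement u (N + n) y).trans
      (by linarith [ha_anti (Nat.le_add_right N n)]))
    K (δ := ε) (x := x) (by simp only [← add_assoc]; linarith)
  simp only [← add_assoc] at hy
  have hKδ : 2 * B + 1 < K * a N :=
    ((div_lt_iff₀ hδ).1 hK).trans_le (mul_le_mul_of_nonneg_left (hδa N) K.cast_nonneg)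
  linarith [(abs_le.1 (hB' (N + 1) y)).1, (abs_le.1 (hB' (N + K + 1) x)).2]

theorem tendsto_dist_succ (hloops : ∀ x, adj x x) (f : V → ℝ) {u : ℕ → V → ℝ}
    (hu : ∀ n, u (n + 1) = op adj f (u n)) (hbdd : Bornology.IsBounded (range u)) :
    Tendsto (fun n => dist (u (n + 1)) (u n)) atTop (𝓝 0) := by
  have hu_neg : ∀ n, -u (n + 1) = op adj (-f) (-u n) := fun n => by rw [hu, op_neg]
  have hbdd_neg : Bornology.IsBounded (range fun n => -u n) :=
    hbdd.neg.subset (by rintro _ ⟨n, rfl⟩; exact ⟨n, (neg_neg (u n)).symm⟩)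
  refine Metric.tendsto_nhds.2 fun ε hε => ?_
  filter_upwards [eventually_increment_le hloops f hu hbdd (half_pos hε),
    eventually_increment_le hloops (-f) hu_neg hbdd_neg (half_pos hε)] with n hup hdown
  simp only [Pi.neg_apply] at hdown
  rw [dist_zero_right, Real.norm_of_nonneg dist_nonneg]
  refine lt_of_le_of_lt ((dist_pi_le_iff (half_pos hε).le).2 fun x => ?_) (half_lt_self hε)
  rw [Real.dist_eq, abs_sub_le_iff]
  constructor <;> linarith [hup x, hdown x]

end Fintype

end TugOfWar

theorem tug_of_war_convergence_finite_loops_general {V : Type*} [Fintype V]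
    (adj : V → V → Prop) (hloops : ∀ x, adj x x)
    (f u₀ : V → ℝ) (hc : IsLTA adj f 0) :
    ∃ u : V → ℝ, TendstoUniformly (fun n => gameVal adj f u₀ n) u atTop := by
  have hne : ∀ x, ∃ y, adj x y := fun x => ⟨x, hloops x⟩
  have hu : ∀ n, gameVal adj f u₀ (n + 1) = TugOfWar.op adj f (gameVal adj f u₀ n) :=
    fun _ => rfl
  have hbdd := hc.isBounded_range_gameVal hne u₀
  obtain ⟨w, hw⟩ := (TugOfWar.lipschitzWith_op hne f).exists_tendsto_of_tendsto_dist_succ hu hbdd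
    (TugOfWar.tendsto_dist_succ hloops f hu hbdd)
  exact ⟨w, tendstoUniformly_of_tendsto_pi hw⟩

/-- On a finite connected graph with a loop at each vertex, if `c_f = 0`
then the sequence of game values with terminal payoff `u₀` and running payoff `f`
converges uniformly. -/
theorem tug_of_war_convergence_finite_loops {V : Type*} [Fintype V]
    (adj : V → V → Prop) (hsymm : Symmetric adj) (hloops : ∀ x, adj x x)
    (hconn : ∀ x y : V, ∃ n : ℕ, ReachesIn adj n x y)
    (f u₀ : V → ℝ) (hc : IsLTA adj f 0) :
    ∃ u : V → ℝ, TendstoUniformly (fun n => gameVal adj f u₀ n) u atTop :=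
  tug_of_war_convergence_finite_loops_general adj hloops f u₀ hc
end

section
/- Let (V,d) be a compact length space, f : V → ℝ continuous, and (ε_n) a sequence of positive reals converging to 0. Let (u_n) be any sequence of continuous functions on V satisfying −Δ∞^{ε_n} u_n = f − c_f(ε_n) on V and such that 0 is in the range of u_n for every n. Then (u_n) has a subsequence converging uniformly to a Lipschitz continuous function; moreover, there is a universal constant C (independent of V, f, and the sequence) such that the Lipschitz constant of the limit is at most C · diam(V) · ‖f‖, where diam(V) is the diameter of (V,d) and ‖f‖ = sup_{x∈V} |f(x)|. -/
/-!
Write the equation as `sup_{B(z,ε)} u + inf_{B(z,ε)} u - 2 u(z) = ε² (c - f(z))`; since the game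
values grow at most like `n ‖f‖`, `|c| ≤ ‖f‖` and the right side is at most `β = 2 ε² ‖f‖`.
Then the ascent `sup_{B(z,ε)} u - u(z)` drops by at most `β` when one moves to a maximiser on the
ball, so climbing `k` times gives `k · ascent ≤ osc u + k² β`. In a length space any two points are
joined by a chain of about `2 d / ε` steps of size `ε`; along a chain from a minimum to a maximum
of `u`, with `k ≈ 10 diam / ε`, this bounds `osc u` by `O(diam² ‖f‖)`, hence every `ε`-step of `u`
by `O(diam ε ‖f‖)`, and finally `|u(x) - u(y)| ≤ C diam ‖f‖ (d(x,y) + ε)`. The inf-convolutions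
`inf_y (u(y) + K d(·,y))` are `K`-Lipschitz and `O(ε)`-close to `u`, so Arzelà–Ascoli applies.
-/

open Set Filter Topology
open scoped ENNReal Classical

/-- A compact length space: the (extended) distance between two points is the infimum of
the lengths (total variations) of continuous paths joining them. -/
def IsLengthSpace (V : Type*) [MetricSpace V] : Prop :=
  ∀ x y : V, edist x y = ⨅ γ : Path x y, eVariationOn (fun t => γ t) (Set.univ : Set unitInterval)

/-- The `ε`-discrete infinity Laplacian
`Δ∞^ε u(x) = (max_{B(x,ε)} u + min_{B(x,ε)} u − 2u(x))/ε²`. -/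
noncomputable def discLap {V : Type*} [MetricSpace V] (ε : ℝ) (u : V → ℝ) (x : V) : ℝ :=
  (sSup (u '' {y | dist x y ≤ ε}) + sInf (u '' {y | dist x y ≤ ε}) - 2 * u x) / ε ^ 2

open Finset Metric
open scoped NNReal

lemma abs_csSup_le {s : Set ℝ} {M : ℝ} (hs : s.Nonempty) (h : ∀ a ∈ s, |a| ≤ M) :
    |sSup s| ≤ M := by
  obtain ⟨a, ha⟩ := hs
  have hbdd : BddAbove s := ⟨M, fun b hb => (abs_le.mp (h b hb)).2⟩
  exact abs_le.mpr ⟨(abs_le.mp (h a ha)).1.trans (le_csSup hbdd ha),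
    csSup_le ⟨a, ha⟩ fun b hb => (abs_le.mp (h b hb)).2⟩

lemma abs_csInf_le {s : Set ℝ} {M : ℝ} (hs : s.Nonempty) (h : ∀ a ∈ s, |a| ≤ M) :
    |sInf s| ≤ M := by
  rw [Real.sInf_def, abs_neg]
  exact abs_csSup_le hs.neg fun a ha => by simpa using h (-a) ha

section TugOfWar

variable {V : Type*} {adj : V → V → Prop} {f : V → ℝ} {F : ℝ}

lemma abs_gameVal_le_s6 (hadj : ∀ x, adj x x) (hf : ∀ x, |f x| ≤ F) (n : ℕ) (x : V) :
    |gameVal adj f (fun _ => 0) n x| ≤ n * F := by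
  induction n generalizing x with
  | zero => simp [gameVal]
  | succ n ih =>
    have hne : (gameVal adj f (fun _ => 0) n '' {y | adj x y}).Nonempty := ⟨_, x, hadj x, rfl⟩
    have hbd : ∀ a ∈ gameVal adj f (fun _ => 0) n '' {y | adj x y}, |a| ≤ n * F := by
      rintro _ ⟨y, -, rfl⟩
      exact ih y
    have hsup := abs_le.mp (abs_csSup_le hne hbd)
    have hinf := abs_le.mp (abs_csInf_le hne hbd)
    have hfx := abs_le.mp (hf x)
    simp only [gameVal]
    push_cast
    exact abs_le.mpr ⟨by linarith, by linarith⟩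

lemma abs_le_of_isLTA [Nonempty V] (hadj : ∀ x, adj x x) (hf : ∀ x, |f x| ≤ F) {c : ℝ}
    (h : IsLTA adj f c) : |c| ≤ F := by
  obtain ⟨C, hC⟩ := h
  obtain ⟨x⟩ := ‹Nonempty V›
  have hlin : ∀ n : ℕ, n * (|c| - F) ≤ C := fun n => by
    have h₁ := hC n x
    have h₂ := abs_gameVal_le_s6 hadj hf n x
    have h₃ : |(n : ℝ) * c| = n * |c| := by rw [abs_mul, Nat.abs_cast]
    have := abs_sub_abs_le_abs_sub ((n : ℝ) * c) (gameVal adj f (fun _ => 0) n x)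
    rw [abs_sub_comm (n * c)] at this
    linarith
  by_contra! hcF
  obtain ⟨n, hn⟩ := exists_nat_gt (C / (|c| - F))
  linarith [(div_lt_iff₀ (sub_pos.mpr hcF)).mp hn, hlin n]

end TugOfWar

section Chains

variable {V : Type*}

theorem ReachesIn.abs_sub_le {adj : V → V → Prop} {g : V → ℝ} {M : ℝ}
    (hg : ∀ a b, adj a b → |g a - g b| ≤ M) :
    ∀ {m : ℕ} {x y : V}, ReachesIn adj m x y → |g x - g y| ≤ m * M
  | 0, x, y, h => by cases h; simp
  | m + 1, x, y, ⟨z, hxz, hzy⟩ => by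
    have := (_root_.abs_sub_le (g x) (g z) (g y)).trans
      (add_le_add (hg x z hxz) (hzy.abs_sub_le hg))
    push_cast
    linarith

variable [PseudoMetricSpace V]

theorem exists_reachesIn_of_sum_dist_le {ε L : ℝ} (hε : 0 < ε) (N : ℕ) (p : ℕ → V)
    (hstep : ∀ i < N, dist (p i) (p (i + 1)) ≤ ε / 2)
    (hL : ∑ i ∈ range N, dist (p i) (p (i + 1)) ≤ L) :
    ∃ m : ℕ, ReachesIn (fun a b => dist a b ≤ ε) m (p 0) (p N) ∧ m * ε ≤ 2 * L + ε := by
  induction N using Nat.strong_induction_on generalizing p L with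
  | _ N ih =>
    have hL0 : 0 ≤ L := (sum_nonneg fun i _ => dist_nonneg).trans hL
    by_cases hN : dist (p 0) (p N) ≤ ε
    · exact ⟨1, ⟨p N, hN, rfl⟩, by push_cast; linarith⟩
    set j := Nat.findGreatest (fun i => dist (p 0) (p i) ≤ ε) N
    have hN1 : 1 ≤ N := Nat.one_le_iff_ne_zero.mpr fun h => hN (by simp [h, hε.le])
    have hp1 : dist (p 0) (p 1) ≤ ε := by linarith [hstep 0 hN1]
    have hj1 : 1 ≤ j := Nat.le_findGreatest hN1 hp1
    have hpj : dist (p 0) (p j) ≤ ε :=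
      Nat.findGreatest_spec (P := fun i => dist (p 0) (p i) ≤ ε) hN1 hp1
    have hjN : j < N := (Nat.findGreatest_le N).lt_of_ne fun h => hN (h ▸ hpj)
    have hpj1 : ε < dist (p 0) (p (j + 1)) :=
      lt_of_not_ge fun h => (Nat.lt_succ_self j).not_ge (Nat.le_findGreatest hjN h)
    have hprefix : ε / 2 ≤ ∑ i ∈ range j, dist (p i) (p (i + 1)) := by
      have := dist_le_range_sum_dist p (j + 1)
      rw [sum_range_succ] at this
      linarith [hstep j hjN]
    have hsplit := sum_range_add (fun i => dist (p i) (p (i + 1))) j (N - j)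
    rw [Nat.add_sub_cancel' hjN.le] at hsplit
    obtain ⟨m, hm, hmε⟩ := ih (N - j) (by omega) (fun i => p (j + i)) (L := L - ε / 2)
      (fun i hi => by simpa [add_assoc] using hstep (j + i) (by omega))
      (by simp only [add_assoc] at hsplit ⊢; linarith)
    simp only [add_zero, Nat.add_sub_cancel' hjN.le] at hm
    exact ⟨m + 1, ⟨p j, hpj, hm⟩, by push_cast; linarith⟩

theorem Path.exists_sum_dist_le_eVariationOn {x y : V} (γ : Path x y) {δ : ℝ} (hδ : 0 < δ) :
    ∃ (N : ℕ) (p : ℕ → V), p 0 = x ∧ p N = y ∧ (∀ i, dist (p i) (p (i + 1)) ≤ δ) ∧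
      ENNReal.ofReal (∑ i ∈ range N, dist (p i) (p (i + 1))) ≤
        eVariationOn (fun t => γ t) Set.univ := by
  obtain ⟨η, hη, hγη⟩ := Metric.uniformContinuous_iff.mp γ.uniformContinuous_extend δ hδ
  set N := ⌊1 / η⌋₊ + 1
  have hN : (0 : ℝ) < N := by positivity
  have hNη : 1 / (N : ℝ) < η := by
    rw [div_lt_iff₀ hN, ← div_lt_iff₀' hη]
    exact_mod_cast Nat.lt_floor_add_one (1 / η)
  set s : ℕ → unitInterval := fun i => Set.projIcc 0 1 zero_le_one (i / N)
  have hs : Monotone s := (Set.monotone_projIcc _).comp fun i j hij =>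
    div_le_div_of_nonneg_right (by exact_mod_cast hij) hN.le
  refine ⟨N, fun i => γ (s i), by simp [s], by simp [s, hN.ne'], fun i => ?_, ?_⟩
  · refine (hγη ?_).le
    rw [Real.dist_eq, ← sub_div, Nat.cast_succ, abs_div, abs_of_pos hN]
    simpa using hNη
  · rw [ENNReal.ofReal_sum_of_nonneg fun i _ => dist_nonneg]
    refine le_trans (le_of_eq ?_)
      (eVariationOn.sum_le (f := fun t => γ t) (n := N) hs fun i => Set.mem_univ _)
    refine sum_congr rfl fun i _ => ?_
    rw [edist_dist, dist_comm]

end Chains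

section LengthSpace

variable {V : Type*} [MetricSpace V] {ε : ℝ}

theorem IsLengthSpace.exists_reachesIn (hlen : IsLengthSpace V) (x y : V) (hε : 0 < ε) :
    ∃ m : ℕ, ReachesIn (fun a b => dist a b ≤ ε) m x y ∧ m * ε ≤ 2 * dist x y + 3 * ε := by
  have hlt : (⨅ γ : Path x y, eVariationOn (fun t => γ t) Set.univ) <
      ENNReal.ofReal (dist x y + ε) := by
    rw [← hlen, edist_dist, ENNReal.ofReal_lt_ofReal_iff (by positivity)]
    linarith
  obtain ⟨γ, hγ⟩ := iInf_lt_iff.mp hlt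
  obtain ⟨N, p, rfl, rfl, hstep, hsum⟩ := γ.exists_sum_dist_le_eVariationOn (half_pos hε)
  have hL : ∑ i ∈ range N, dist (p i) (p (i + 1)) ≤ dist (p 0) (p N) + ε :=
    (ENNReal.ofReal_le_ofReal_iff (by positivity)).mp (hsum.trans hγ.le)
  obtain ⟨m, hm, hmε⟩ := exists_reachesIn_of_sum_dist_le hε N p (fun i _ => hstep i) hL
  exact ⟨m, hm, by linarith⟩

theorem IsLengthSpace.abs_sub_le (hlen : IsLengthSpace V) (hε : 0 < ε) {g : V → ℝ} {M : ℝ}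
    (hg : ∀ a b, dist a b ≤ ε → |g a - g b| ≤ M) (x y : V) :
    |g x - g y| ≤ M * (2 * dist x y + 3 * ε) / ε := by
  obtain ⟨m, hm, hmε⟩ := hlen.exists_reachesIn x y hε
  have hM : 0 ≤ M := by simpa using hg x x (by simpa using hε.le)
  calc |g x - g y| ≤ m * M := hm.abs_sub_le hg
    _ ≤ (2 * dist x y + 3 * ε) / ε * M :=
      mul_le_mul_of_nonneg_right ((le_div_iff₀ hε).mpr hmε) hM
    _ = M * (2 * dist x y + 3 * ε) / ε := by ring

end LengthSpace

section DiscreteLaplacian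

variable {V : Type*} [MetricSpace V] {ε β : ℝ} {u : V → ℝ}

lemma discLap_eq (ε : ℝ) (u : V → ℝ) (z : V) :
    discLap ε u z =
      (sSup (u '' closedBall z ε) + sInf (u '' closedBall z ε) - 2 * u z) / ε ^ 2 := by
  have hball : {y | dist z y ≤ ε} = closedBall z ε := by ext y; simp [dist_comm]
  rw [discLap, hball]

noncomputable def ascent (ε : ℝ) (u : V → ℝ) (z : V) : ℝ := sSup (u '' closedBall z ε) - u z

variable [CompactSpace V]

lemma le_csSup_image_closedBall (hu : Continuous u) {z w : V} (hw : dist w z ≤ ε) :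
    u w ≤ sSup (u '' closedBall z ε) :=
  le_csSup ((isCompact_closedBall z ε).image hu).bddAbove ⟨w, hw, rfl⟩

lemma csInf_image_closedBall_le (hu : Continuous u) {z w : V} (hw : dist w z ≤ ε) :
    sInf (u '' closedBall z ε) ≤ u w :=
  csInf_le ((isCompact_closedBall z ε).image hu).bddBelow ⟨w, hw, rfl⟩

variable (hu : Continuous u)
  (hmid : ∀ z, |sSup (u '' closedBall z ε) + sInf (u '' closedBall z ε) - 2 * u z| ≤ β)
include hu hmid

lemma abs_sub_le_ascent_add {z w : V} (hw : dist w z ≤ ε) : |u w - u z| ≤ ascent ε u z + β := by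
  have h₁ := le_csSup_image_closedBall hu hw
  have h₂ := csInf_image_closedBall_le hu hw
  have h₃ := (abs_le.mp (hmid z)).1
  have hβ : 0 ≤ β := (abs_nonneg _).trans (hmid z)
  rw [ascent, abs_le]
  constructor <;> linarith

lemma exists_ascent_sub_le (hε : 0 ≤ ε) (z : V) :
    ∃ w, u w - u z = ascent ε u z ∧ ascent ε u z - β ≤ ascent ε u w := by
  obtain ⟨w, hw, hmax⟩ := (isCompact_closedBall z ε).exists_isMaxOn
    ⟨z, mem_closedBall_self hε⟩ hu.continuousOn
  have hsup : sSup (u '' closedBall z ε) = u w :=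
    (IsGreatest.csSup_eq ⟨⟨w, hw, rfl⟩, by rintro _ ⟨y, hy, rfl⟩; exact hmax hy⟩)
  have h₁ := csInf_image_closedBall_le hu (mem_closedBall_comm.mp hw)
  have h₂ := (abs_le.mp (hmid w)).1
  refine ⟨w, by rw [ascent, hsup], ?_⟩
  rw [ascent, ascent, hsup]
  linarith

lemma nat_mul_ascent_le (hε : 0 ≤ ε) {O : ℝ} (hO : ∀ a b, u a - u b ≤ O) (z : V) (k : ℕ) :
    k * ascent ε u z ≤ O + k ^ 2 * β := by
  have hβ : 0 ≤ β := (abs_nonneg _).trans (hmid z)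
  have hz : 0 ≤ ascent ε u z :=
    sub_nonneg.mpr (le_csSup_image_closedBall hu (by simpa using hε))
  have hclimb : ∀ k : ℕ, ∃ w, ascent ε u z - k * β ≤ ascent ε u w ∧
      k * ascent ε u z - k ^ 2 * β ≤ u w - u z := by
    intro k
    induction k with
    | zero => exact ⟨z, by simp, by simp⟩
    | succ k ih =>
      obtain ⟨w, hw₁, hw₂⟩ := ih
      obtain ⟨w', hw'₁, hw'₂⟩ := exists_ascent_sub_le hu hmid hε w
      refine ⟨w', ?_, ?_⟩ <;> push_cast <;> nlinarith
  obtain ⟨w, -, hw⟩ := hclimb k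
  linarith [hO w z]

end DiscreteLaplacian

section Estimate

variable {V : Type*} [MetricSpace V] [CompactSpace V]

lemma dist_le_diam_univ (x y : V) : dist x y ≤ diam (Set.univ : Set V) :=
  dist_le_diam_of_mem isCompact_univ.isBounded (Set.mem_univ x) (Set.mem_univ y)

theorem abs_sub_le_of_abs_discLap_le (hlen : IsLengthSpace V) {ε B : ℝ} {u : V → ℝ}
    (hu : Continuous u) (hε : 0 < ε) (hεD : ε ≤ diam (Set.univ : Set V))
    (hΔ : ∀ z, |discLap ε u z| ≤ B) (x y : V) :
    |u x - u y| ≤ 24 * diam (Set.univ : Set V) * B * (2 * dist x y + 3 * ε) := by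
  set D := diam (Set.univ : Set V)
  have hB : 0 ≤ B := (abs_nonneg _).trans (hΔ x)
  have hD : 0 < D := hε.trans_le hεD
  have hmid : ∀ z, |sSup (u '' closedBall z ε) + sInf (u '' closedBall z ε) - 2 * u z|
      ≤ ε ^ 2 * B := fun z => by
    have := hΔ z
    rwa [discLap_eq, abs_div, abs_of_pos (by positivity : (0 : ℝ) < ε ^ 2),
      div_le_iff₀' (by positivity)] at this
  obtain ⟨a, -, hmax⟩ := isCompact_univ.exists_isMaxOn ⟨x, trivial⟩ hu.continuousOn
  obtain ⟨b, -, hmin⟩ := isCompact_univ.exists_isMinOn ⟨x, trivial⟩ hu.continuousOn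
  set O := u a - u b
  have hO : ∀ v w, u v - u w ≤ O := fun v w => by
    linarith [isMaxOn_iff.mp hmax v trivial, isMinOn_iff.mp hmin w trivial]
  -- `k ≈ 10 D / ε`, so that a chain across `V` has at most about `k / 2` steps
  set k := ⌈10 * D / ε⌉₊
  have hk₁ : 10 * D ≤ k * ε := (div_le_iff₀ hε).mp (Nat.le_ceil _)
  have hk₂ : k * ε ≤ 10 * D + ε := by
    have := Nat.ceil_lt_add_one (by positivity : 0 ≤ 10 * D / ε)
    nlinarith [div_mul_cancel₀ (10 * D) hε.ne']
  have hk : (0 : ℝ) < k := by nlinarith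
  have hloc : ∀ v w, dist v w ≤ ε → |u v - u w| ≤ O / k + (k + 1) * (ε ^ 2 * B) := by
    intro v w hvw
    have h₁ := abs_sub_le_ascent_add hu hmid hvw
    have h₂ := nat_mul_ascent_le hu hmid hε.le hO w k
    rw [div_add' _ _ _ hk.ne', le_div_iff₀ hk]
    nlinarith
  have hO₀ : 0 ≤ O := by linarith [hO b b]
  have hk₃ : (k + 1) * (ε ^ 2 * B) ≤ 12 * D * ε * B := by
    have : (k + 1) * (ε ^ 2 * B) = ε * B * (k * ε + ε) := by ring
    rw [this]
    nlinarith [mul_le_mul_of_nonneg_left (by linarith : k * ε + ε ≤ 12 * D)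
      (mul_nonneg hε.le hB)]
  have hOD : O * ε ≤ 120 * D ^ 2 * B * ε := by
    have h₁ := hlen.abs_sub_le hε hloc a b
    rw [abs_of_nonneg hO₀, le_div_iff₀ hε] at h₁
    have h₂ : 5 * D * (O / k) ≤ O * ε / 2 := by
      rw [mul_div_assoc', div_le_iff₀ hk]
      nlinarith [mul_le_mul_of_nonneg_left hk₁ hO₀]
    have h₃ : 0 ≤ O / k + (k + 1) * (ε ^ 2 * B) := by positivity
    nlinarith [mul_le_mul_of_nonneg_left
      (by linarith [dist_le_diam_univ a b] : 2 * dist a b + 3 * ε ≤ 5 * D) h₃]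
  have hstep : ∀ v w, dist v w ≤ ε → |u v - u w| ≤ 24 * D * ε * B := by
    intro v w hvw
    have h₁ : O / k ≤ 12 * D * ε * B := by
      rw [div_le_iff₀ hk]
      nlinarith [le_of_mul_le_mul_right hOD hε, mul_le_mul_of_nonneg_left hk₁
        (by positivity : 0 ≤ 12 * D * B)]
    linarith [hloc v w hvw]
  calc |u x - u y| ≤ 24 * D * ε * B * (2 * dist x y + 3 * ε) / ε := hlen.abs_sub_le hε hstep x y
    _ = 24 * D * B * (2 * dist x y + 3 * ε) := by field_simp

end Estimate

section Compactness

variable {X : Type*}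

theorem TendstoUniformly.of_dist_le {ι β : Type*} [PseudoMetricSpace β] {l : Filter ι}
    {F G : ι → X → β} {w : X → β} {δ : ι → ℝ} (hG : TendstoUniformly G w l)
    (hδ : Tendsto δ l (𝓝 0)) (hFG : ∀ i x, dist (F i x) (G i x) ≤ δ i) :
    TendstoUniformly F w l := by
  rw [Metric.tendstoUniformly_iff] at hG ⊢
  intro η hη
  filter_upwards [hG (η / 2) (half_pos hη), hδ.eventually (gt_mem_nhds (half_pos hη))]
    with i hi hδi x
  calc dist (w x) (F i x) ≤ dist (w x) (G i x) + dist (F i x) (G i x) := dist_triangle_right _ _ _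
    _ < η := by linarith [hi x, hFG i x]

theorem exists_lipschitzWith_le_le_add [PseudoMetricSpace X] {g : X → ℝ} {K : ℝ≥0} {δ : ℝ}
    (hg : ∀ x y, g x - g y ≤ K * dist x y + δ) :
    ∃ v : X → ℝ, LipschitzWith K v ∧ ∀ x, v x ≤ g x ∧ g x ≤ v x + δ := by
  have hbdd : ∀ x, BddBelow (Set.range fun y => g y + K * dist x y) := fun x =>
    ⟨g x - δ, by rintro _ ⟨y, rfl⟩; linarith [hg x y]⟩
  refine ⟨fun x => ⨅ y, g y + K * dist x y, LipschitzWith.of_le_add_mul K fun x x' => ?_,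
    fun x => ⟨(ciInf_le (hbdd x) x).trans (by simp), ?_⟩⟩
  · have : Nonempty X := ⟨x⟩
    rw [← sub_le_iff_le_add]
    refine le_ciInf fun y => ?_
    have := ciInf_le (hbdd x) y
    have := dist_triangle x x' y
    have := K.coe_nonneg
    nlinarith
  · have : Nonempty X := ⟨x⟩
    rw [← sub_le_iff_le_add]
    exact le_ciInf fun y => by linarith [hg x y]

variable [MetricSpace X] [CompactSpace X]

theorem exists_subseq_tendstoUniformly_of_lipschitzWith {v : ℕ → X → ℝ} {K : ℝ≥0} {R : ℝ}
    (hv : ∀ n, LipschitzWith K (v n)) (hR : ∀ n x, |v n x| ≤ R) :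
    ∃ (φ : ℕ → ℕ) (w : X → ℝ), StrictMono φ ∧ TendstoUniformly (fun k => v (φ k)) w atTop ∧
      LipschitzWith K w := by
  set S : Set C(X, ℝ) := {g | LipschitzWith K g ∧ ∀ x, g x ∈ Set.Icc (-R) R}
  have hS : IsCompact S := by
    refine ArzelaAscoli.isCompact_of_equicontinuous S ?_ ?_
    · have himage : ContinuousMap.toFun '' S =
          {g | LipschitzWith K g} ∩ Set.univ.pi fun _ => Set.Icc (-R) R := by
        ext g
        refine ⟨?_, fun hg => ⟨⟨g, hg.1.continuous⟩, ⟨hg.1, fun x => hg.2 x trivial⟩, rfl⟩⟩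
        rintro ⟨g, hg, rfl⟩
        exact ⟨hg.1, fun x _ => hg.2 x⟩
      rw [himage]
      exact (isCompact_univ_pi fun _ => isCompact_Icc).inter_left
        (isClosed_setOfPred_lipschitzWith K)
    · exact (LipschitzWith.uniformEquicontinuous _ K fun g => g.2.1).equicontinuous
  obtain ⟨w, hw, φ, hφ, hlim⟩ := hS.isSeqCompact (x := fun n => ⟨v n, (hv n).continuous⟩)
    fun n => ⟨hv n, fun x => abs_le.mp (hR n x)⟩
  exact ⟨φ, w, hφ, ContinuousMap.tendsto_iff_tendstoUniformly.mp hlim, hw.1⟩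

theorem exists_subseq_tendstoUniformly_of_approx_lipschitz {u : ℕ → X → ℝ} {K : ℝ≥0}
    {δ : ℕ → ℝ} (hδ : Tendsto δ atTop (𝓝 0))
    (hu : ∀ᶠ n in atTop, ∀ x y, |u n x - u n y| ≤ K * dist x y + δ n)
    (hzero : ∀ n, ∃ x, u n x = 0) :
    ∃ (φ : ℕ → ℕ) (w : X → ℝ), StrictMono φ ∧ TendstoUniformly (fun k => u (φ k)) w atTop ∧
      LipschitzWith K w := by
  obtain ⟨N, hN⟩ := eventually_atTop.mp (hu.and (hδ.eventually (ge_mem_nhds zero_lt_one)))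
  choose v hv hvu using fun n =>
    exists_lipschitzWith_le_le_add fun x y => (le_abs_self _).trans ((hN (n + N) le_add_self).1 x y)
  have hR : ∀ n x, |v n x| ≤ K * diam (Set.univ : Set X) + 2 := by
    intro n x
    obtain ⟨x₀, hx₀⟩ := hzero (n + N)
    obtain ⟨hlip, hδ₁⟩ := hN (n + N) le_add_self
    have h₁ := abs_le.mp (hlip x x₀)
    have h₂ := abs_le.mp (hlip x x)
    have h₃ := mul_le_mul_of_nonneg_left (dist_le_diam_univ x x₀) K.coe_nonneg
    rw [hx₀] at h₁
    simp only [sub_self, dist_self, mul_zero, zero_add] at h₂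
    rw [abs_le]
    constructor <;> linarith [hvu n x]
  obtain ⟨φ, w, hφ, hvw, hw⟩ := exists_subseq_tendstoUniformly_of_lipschitzWith hv hR
  refine ⟨fun k => φ k + N, w, hφ.add_const N, hvw.of_dist_le (δ := fun k => δ (φ k + N)) ?_ ?_, hw⟩
  · exact hδ.comp ((tendsto_add_atTop_nat N).comp hφ.tendsto_atTop)
  · intro k x
    rw [Real.dist_eq, abs_le]
    constructor <;> linarith [hvu (φ k) x]

end Compactness

/-- There is a universal constant `C` such that, on any compact length
space `V`, for positive `ε_n → 0`, any sequence of continuous functions `u_n` with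
`−Δ∞^{ε_n} u_n = f − c_f(ε_n)` whose ranges contain `0` has a uniformly convergent
subsequence whose limit is Lipschitz with constant at most `C · diam(V) · ‖f‖`. -/
theorem subsequential_limits_lipschitz :
    ∃ C : ℝ, 0 < C ∧
      ∀ (V : Type) [MetricSpace V] [CompactSpace V] [Nonempty V],
        IsLengthSpace V →
        ∀ f : V → ℝ, Continuous f →
        ∀ ε : ℕ → ℝ, (∀ n, 0 < ε n) → Tendsto ε atTop (𝓝 0) →
        ∀ c : ℕ → ℝ, (∀ n, IsLTA (fun x y => dist x y ≤ ε n) f (c n)) →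
        ∀ u : ℕ → V → ℝ, (∀ n, Continuous (u n)) →
        (∀ (n : ℕ) (x : V), -discLap (ε n) (u n) x = f x - c n) →
        (∀ n, ∃ x, u n x = 0) →
        ∃ (φ : ℕ → ℕ) (w : V → ℝ) (K : ℝ), StrictMono φ ∧
          TendstoUniformly (fun k => u (φ k)) w atTop ∧
          (∀ x y : V, |w x - w y| ≤ K * dist x y) ∧
          K ≤ C * Metric.diam (Set.univ : Set V) * (⨆ x : V, |f x|) := by
  refine ⟨96, by norm_num, fun V _ _ _ hlen f hf ε hε hε₀ c hc u hu heq hzero => ?_⟩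
  set F := ⨆ x : V, |f x|
  have hfF : ∀ x, |f x| ≤ F := fun x => le_ciSup (isCompact_range hf.abs).bddAbove x
  have hF : 0 ≤ F := (abs_nonneg _).trans (hfF (Classical.arbitrary V))
  have hcF : ∀ n, |c n| ≤ F := fun n =>
    abs_le_of_isLTA (fun x => by simpa using (hε n).le) hfF (hc n)
  have hΔ : ∀ n z, |discLap (ε n) (u n) z| ≤ 2 * F := fun n z => by
    rw [← abs_neg, heq]
    linarith [abs_sub (f z) (c n), hfF z, hcF n]
  set D := diam (Set.univ : Set V)
  let K : ℝ≥0 := ⟨96 * D * F, by positivity⟩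
  have hest : ∀ᶠ n in atTop, ∀ x y, |u n x - u n y| ≤ K * dist x y + 144 * D * F * ε n := by
    rcases (diam_nonneg : 0 ≤ D).eq_or_lt with hD | hD
    · refine Eventually.of_forall fun n x y => ?_
      obtain rfl : x = y := dist_le_zero.mp (hD ▸ dist_le_diam_univ x y)
      simp [D, ← hD]
    · filter_upwards [hε₀.eventually (eventually_le_nhds hD)] with n hn x y
      have := abs_sub_le_of_abs_discLap_le hlen (hu n) (hε n) hn (hΔ n) x y
      change _ ≤ 96 * D * F * _ + _
      linarith
  obtain ⟨φ, w, hφ, hw, hlip⟩ := exists_subseq_tendstoUniformly_of_approx_lipschitz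
    (by simpa using hε₀.const_mul (144 * D * F)) hest hzero
  exact ⟨φ, w, K, hφ, hw, fun x y => by simpa [Real.dist_eq] using hlip.dist_le_mul x y, le_rfl⟩
end

section
/- Let G=(V,E) be a finite connected graph with a loop at each vertex, f, u₀ : V → ℝ functions with c_f = 0, and let (u_n) be the game values with terminal payoff u₀ and running payoff f, with limit u = lim_n u_n. Assume that for each vertex x ∈ V there are unique neighbors y_m and y_M of x such that u(y_m) = min_{y∼x} u(y) and u(y_M) = max_{y∼x} u(y). Then there exist constants C > 0 and 0 < α < 1 (depending on G, f and u₀) such that ‖u_n − u‖ ≤ C·α^n for all n, where ‖·‖ is the supremum norm. -/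
open Set Filter Topology
open scoped ENNReal Classical

/-!
Since the extremal neighbours of `u` are strict, once `u_n` is close enough to `u` the maximum
and minimum over every neighbourhood are attained at the same vertices `y_M x`, `y_m x` as
for `u`. From then on the error
`e_n = u_n - u` evolves by the fixed linear map `T e x = (e (y_M x) + e (y_m x)) / 2`, and the
orbit of `e_N` tends to `0`, i.e. lies in the stable subspace of `T`. On that finite-dimensional
invariant subspace the powers of `T` tend to `0` in operator norm, so some power has norm
at most `1/2`, which gives a geometric rate.
-/

open Asymptotics

theorem ContinuousLinearMap.tendsto_nhds_zero_of_forall_tendsto_apply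
    {𝕜 E F ι : Type*} [NontriviallyNormedField 𝕜] [CompleteSpace 𝕜]
    [NormedAddCommGroup E] [NormedSpace 𝕜 E] [FiniteDimensional 𝕜 E]
    [NormedAddCommGroup F] [NormedSpace 𝕜 F] {l : Filter ι} {A : ι → E →L[𝕜] F}
    (h : ∀ v, Tendsto (fun i => A i v) l (𝓝 0)) : Tendsto A l (𝓝 0) := by
  let b := Module.finBasis 𝕜 E
  obtain ⟨C, -, hC⟩ := b.exists_opNorm_le (F := F)
  have hsum : Tendsto (fun i => C * ∑ j, ‖A i (b j)‖) l (𝓝 0) := by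
    simpa using (tendsto_finsetSum _ fun j _ => (h (b j)).norm).const_mul C
  refine squeeze_zero_norm (fun i => hC (by positivity) fun j => ?_) hsum
  exact Finset.single_le_sum (f := fun j => ‖A i (b j)‖) (fun _ _ => norm_nonneg _)
    (Finset.mem_univ j)

theorem exists_isBigO_pow_of_tendsto_pow {R : Type*} [SeminormedRing R] {a : R}
    (h : Tendsto (a ^ ·) atTop (𝓝 0)) :
    ∃ α : ℝ, 0 < α ∧ α < 1 ∧ (a ^ ·) =O[atTop] (α ^ ·) := by
  have hev : ∀ᶠ n in atTop, ‖a ^ n‖ ≤ 2⁻¹ := by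
    simpa using h.norm.eventually (ge_mem_nhds (by norm_num : ‖(0 : R)‖ < 2⁻¹))
  obtain ⟨k, hak, hk⟩ := (hev.and (eventually_gt_atTop 0)).exists
  set α : ℝ := 2⁻¹ ^ (k⁻¹ : ℝ)
  have hαk : α ^ k = 2⁻¹ := by
    rw [← Real.rpow_natCast, ← Real.rpow_mul (by norm_num), inv_mul_cancel₀ (by positivity),
      Real.rpow_one]
  have hα0 : 0 < α := by positivity
  have hα1 : α < 1 := Real.rpow_lt_one (by norm_num) (by norm_num) (by positivity)
  set M := ∑ j ∈ Finset.range k, ‖a ^ j‖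
  have hM : 0 ≤ M := Finset.sum_nonneg fun _ _ => norm_nonneg _
  -- each block of `k` steps halves the norm, and `α ^ k = 1/2`
  have hpow_le : ∀ n, ‖a ^ n‖ ≤ 2 * M * α ^ n := by
    intro n
    induction n using Nat.strong_induction_on with
    | _ n ih =>
    rcases lt_or_ge n k with hn | hn
    · have hαn : 2⁻¹ ≤ α ^ n := hαk ▸ pow_le_pow_of_le_one hα0.le hα1.le hn.le
      have haM : ‖a ^ n‖ ≤ M :=
        Finset.single_le_sum (fun _ _ => norm_nonneg _) (Finset.mem_range.2 hn)
      nlinarith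
    · calc ‖a ^ n‖ = ‖a ^ k * a ^ (n - k)‖ := by rw [← pow_add, Nat.add_sub_cancel' hn]
        _ ≤ ‖a ^ k‖ * ‖a ^ (n - k)‖ := norm_mul_le _ _
        _ ≤ 2⁻¹ * (2 * M * α ^ (n - k)) := by gcongr; exact ih _ (by omega)
        _ = 2 * M * α ^ n := by rw [← hαk, mul_left_comm, ← pow_add, Nat.add_sub_cancel' hn]
  refine ⟨α, hα0, hα1, IsBigO.of_bound (2 * M) (.of_forall fun n => ?_)⟩
  rw [Real.norm_of_nonneg (by positivity)]
  exact hpow_le n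

def Module.End.stableSubmodule {R M : Type*} [Semiring R] [AddCommMonoid M] [Module R M]
    [TopologicalSpace M] [ContinuousAdd M] [ContinuousConstSMul R M] (T : Module.End R M) :
    Submodule R M where
  carrier := {v | Tendsto (fun n => (T ^ n) v) atTop (𝓝 0)}
  add_mem' hv hw := by simpa using hv.add hw
  zero_mem' := by simpa using tendsto_const_nhds
  smul_mem' c v hv := by simpa using hv.const_smul c

theorem Module.End.apply_mem_stableSubmodule {R M : Type*} [Semiring R] [AddCommMonoid M]
    [Module R M] [TopologicalSpace M] [ContinuousAdd M] [ContinuousConstSMul R M]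
    (T : Module.End R M) {v : M} (hv : v ∈ T.stableSubmodule) : T v ∈ T.stableSubmodule := by
  change Tendsto _ _ _
  simpa only [Function.comp_def, pow_succ, Module.End.mul_apply] using
    hv.comp (tendsto_add_atTop_nat 1)

theorem Module.End.exists_isBigO_pow_apply_of_mem_stableSubmodule {𝕜 E : Type*}
    [NontriviallyNormedField 𝕜] [CompleteSpace 𝕜] [NormedAddCommGroup E] [NormedSpace 𝕜 E]
    [FiniteDimensional 𝕜 E] (T : Module.End 𝕜 E) {v : E} (hv : v ∈ T.stableSubmodule) :
    ∃ α : ℝ, 0 < α ∧ α < 1 ∧ (fun n => (T ^ n) v) =O[atTop] (α ^ ·) := by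
  set S := T.stableSubmodule
  let A : S →L[𝕜] S :=
    Module.End.toContinuousLinearMap S (T.restrict fun _ => T.apply_mem_stableSubmodule)
  have hpow : ∀ n (w : S), ((A ^ n) w : E) = (T ^ n) w := by
    intro n w
    rw [← map_pow, Module.End.pow_restrict]
    rfl
  have hA : Tendsto (A ^ ·) atTop (𝓝 0) :=
    ContinuousLinearMap.tendsto_nhds_zero_of_forall_tendsto_apply fun w => by
      rw [tendsto_subtype_rng]
      simp only [hpow]
      exact w.2
  obtain ⟨α, hα0, hα1, hO⟩ := exists_isBigO_pow_of_tendsto_pow hA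
  have hvA : (fun n => (T ^ n) v) =O[atTop] (A ^ ·) :=
    IsBigO.of_bound ‖v‖ (.of_forall fun n => by
      rw [← hpow n ⟨v, hv⟩, mul_comm]
      exact (A ^ n).le_opNorm _)
  exact ⟨α, hα0, hα1, hvA.trans hO⟩

theorem exists_isBigO_pow_sub_of_tendsto_of_eventually_affine {𝕜 E : Type*}
    [NontriviallyNormedField 𝕜] [CompleteSpace 𝕜] [NormedAddCommGroup E] [NormedSpace 𝕜 E]
    [FiniteDimensional 𝕜 E] {T : Module.End 𝕜 E} {b u : E} {g : ℕ → E}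
    (hg : Tendsto g atTop (𝓝 u)) (hstep : ∀ᶠ n in atTop, g (n + 1) = T (g n) + b) :
    ∃ α : ℝ, 0 < α ∧ α < 1 ∧ (fun n => g n - u) =O[atTop] (α ^ ·) := by
  have hu : u = T u + b :=
    tendsto_nhds_unique_of_eventuallyEq (hg.comp (tendsto_add_atTop_nat 1))
      (((T.continuous_of_finiteDimensional.tendsto u).comp hg).add_const b) hstep
  obtain ⟨N, hN⟩ := eventually_atTop.1 hstep
  have horbit : ∀ k, g (k + N) - u = (T ^ k) (g N - u) := by
    intro k
    induction k with
    | zero => simp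
    | succ k ih =>
      rw [pow_succ', Module.End.mul_apply, ← ih, map_sub, add_right_comm, hN _ (by omega)]
      conv_lhs => rw [hu]
      abel
  have hdecay : g N - u ∈ T.stableSubmodule := by
    change Tendsto _ _ _
    simpa [← horbit] using (hg.comp (tendsto_add_atTop_nat N)).sub_const u
  obtain ⟨α, hα0, hα1, hO⟩ := T.exists_isBigO_pow_apply_of_mem_stableSubmodule hdecay
  have hshift : (fun n => g n - u) =ᶠ[atTop] (fun n => (T ^ (n - N)) (g N - u)) := by
    filter_upwards [eventually_ge_atTop N] with n hn
    rw [← horbit, Nat.sub_add_cancel hn]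
  have hpow : (fun n => α ^ (n - N)) =O[atTop] (α ^ ·) := by
    refine IsBigO.of_bound (α ^ N)⁻¹ ?_
    filter_upwards [eventually_ge_atTop N] with n hn
    rw [pow_sub₀ _ hα0.ne' hn, Real.norm_of_nonneg (by positivity),
      Real.norm_of_nonneg (by positivity), mul_comm]
  exact ⟨α, hα0, hα1,
    ((hO.comp_tendsto (tendsto_sub_atTop_nat N)).trans hpow).congr' hshift.symm .rfl⟩

theorem eventually_sSup_image_eq {ι β : Type*} [Finite ι] [ConditionallyCompleteLinearOrder β]
    [TopologicalSpace β] [OrderTopology β] {s : Set ι} {u : ι → β} {y : ι}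
    (hy : y ∈ s ∧ u y = sSup (u '' s)) (huniq : ∀ z, z ∈ s ∧ u z = sSup (u '' s) → z = y) :
    ∀ᶠ g in 𝓝 u, sSup (g '' s) = g y := by
  have hlt : ∀ z ∈ s, z ≠ y → u z < u y := fun z hz hne =>
    lt_of_le_of_ne (hy.2 ▸ le_csSup (s.toFinite.image u).bddAbove (mem_image_of_mem u hz))
      fun h => hne (huniq z ⟨hz, h.trans hy.2⟩)
  have hev : ∀ᶠ g in 𝓝 u, ∀ z ∈ s, z ≠ y → g z < g y := by
    refine eventually_all.2 fun z => ?_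
    by_cases hz : z ∈ s ∧ z ≠ y
    · filter_upwards [((continuous_apply z).tendsto u).eventually_lt
        ((continuous_apply y).tendsto u) (hlt z hz.1 hz.2)] with g hg using fun _ _ => hg
    · exact .of_forall fun g h₁ h₂ => absurd ⟨h₁, h₂⟩ hz
  filter_upwards [hev] with g hg
  refine IsGreatest.csSup_eq ⟨mem_image_of_mem g hy.1, ?_⟩
  rintro _ ⟨z, hz, rfl⟩
  rcases eq_or_ne z y with rfl | hne
  · exact le_rfl
  · exact (hg z hz hne).le

theorem eventually_sInf_image_eq {ι β : Type*} [Finite ι] [ConditionallyCompleteLinearOrder β]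
    [TopologicalSpace β] [OrderTopology β] {s : Set ι} {u : ι → β} {y : ι}
    (hy : y ∈ s ∧ u y = sInf (u '' s)) (huniq : ∀ z, z ∈ s ∧ u z = sInf (u '' s) → z = y) :
    ∀ᶠ g in 𝓝 u, sInf (g '' s) = g y :=
  eventually_sSup_image_eq (β := βᵒᵈ) hy huniq

theorem game_values_exponential_convergence_general {V : Type*} [Fintype V]
    (adj : V → V → Prop)
    (f u₀ u : V → ℝ)
    (hlim : ∀ x : V, Tendsto (fun n => gameVal adj f u₀ n x) atTop (𝓝 (u x)))
    (hmin : ∀ x : V, ∃! y : V, adj x y ∧ u y = sInf (u '' {z | adj x z}))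
    (hmax : ∀ x : V, ∃! y : V, adj x y ∧ u y = sSup (u '' {z | adj x z})) :
    ∃ C : ℝ, 0 < C ∧ ∃ α : ℝ, 0 < α ∧ α < 1 ∧
      ∀ n : ℕ, (⨆ x : V, |gameVal adj f u₀ n x - u x|) ≤ C * α ^ n := by
  choose yM hyM using hmax
  choose ym hym using hmin
  set g := gameVal adj f u₀
  have hg : Tendsto g atTop (𝓝 u) := tendsto_pi_nhds.2 hlim
  let T : Module.End ℝ (V → ℝ) :=
    (2⁻¹ : ℝ) • (LinearMap.funLeft ℝ ℝ yM + LinearMap.funLeft ℝ ℝ ym)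
  have hstep : ∀ᶠ n in atTop, g (n + 1) = T (g n) + f := by
    have hext : ∀ᶠ h in 𝓝 u, ∀ x, sSup (h '' {y | adj x y}) = h (yM x) ∧
        sInf (h '' {y | adj x y}) = h (ym x) :=
      eventually_all.2 fun x => (eventually_sSup_image_eq (hyM x).1 (hyM x).2).and
        (eventually_sInf_image_eq (hym x).1 (hym x).2)
    filter_upwards [hg.eventually hext] with n hn
    funext x
    simp only [g, gameVal, (hn x).1, (hn x).2, T, LinearMap.smul_apply, LinearMap.add_apply,
      LinearMap.funLeft_apply, Pi.add_apply, Pi.smul_apply, smul_eq_mul]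
    ring
  obtain ⟨α, hα0, hα1, hO⟩ := exists_isBigO_pow_sub_of_tendsto_of_eventually_affine hg hstep
  obtain ⟨C, hC, hbound⟩ := bound_of_isBigO_nat_atTop hO
  refine ⟨C, hC, α, hα0, hα1, fun n => ?_⟩
  have hn := hbound (pow_ne_zero n hα0.ne')
  rw [norm_pow, Real.norm_of_nonneg hα0.le] at hn
  exact Real.iSup_le (fun x => (norm_le_pi_norm (g n - u) x).trans hn) (by positivity)

/-- On a finite connected graph with a loop at each vertex, with
`c_f = 0` and limit `u` of the game values, if at each vertex the minimizing and
maximizing neighbors of `u` are unique, then the convergence `u_n → u` is exponentially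
fast: `‖u_n − u‖ ≤ C·αⁿ` for some `C > 0` and `0 < α < 1`. -/
theorem game_values_exponential_convergence {V : Type*} [Fintype V]
    (adj : V → V → Prop) (hsymm : Symmetric adj) (hloops : ∀ x, adj x x)
    (hconn : ∀ x y : V, ∃ n : ℕ, ReachesIn adj n x y)
    (f u₀ u : V → ℝ) (hc : IsLTA adj f 0)
    (hlim : ∀ x : V, Tendsto (fun n => gameVal adj f u₀ n x) atTop (𝓝 (u x)))
    (hmin : ∀ x : V, ∃! y : V, adj x y ∧ u y = sInf (u '' {z | adj x z}))
    (hmax : ∀ x : V, ∃! y : V, adj x y ∧ u y = sSup (u '' {z | adj x z})) :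
    ∃ C : ℝ, 0 < C ∧ ∃ α : ℝ, 0 < α ∧ α < 1 ∧
      ∀ n : ℕ, (⨆ x : V, |gameVal adj f u₀ n x - u x|) ≤ C * α ^ n :=
  game_values_exponential_convergence_general adj f u₀ u hlim hmin hmax
end

section
/- Let G=(V,E) be a finite connected graph (loops allowed) with graph diameter diam(G), and let f, u : V → ℝ. Then max_V u − min_V u ≤ 2^{diam(G)+1} · (‖f‖ + ‖A_f u − u‖), where ‖·‖ is the supremum norm on V. -/
/-!
Let `u` attain its maximum `M` at `x₀` and put `ε = ‖f‖ + ‖A_f u − u‖`. At a vertex `x` the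
operator averages the largest and the smallest neighbouring value, so for every neighbour `z`
of `x` we get `u x ≤ (M + u z)/2 + ε`; equivalently the shifted defect `M − u + 2ε` at most
doubles along each edge. It equals `2ε` at `x₀`, so after a shortest walk of length at most
`diam(G)` it is at most `2^{diam(G)+1} ε` everywhere.
-/

open Set Filter Topology
open scoped ENNReal Classical

/-- The graph distance: the least length of a walk from `x` to `y`. -/
noncomputable def graphDist {V : Type*} (adj : V → V → Prop) (x y : V) : ℕ :=
  sInf {n | ReachesIn adj n x y}

/-- The diameter of the graph in the graph metric. -/
noncomputable def graphDiam {V : Type*} (adj : V → V → Prop) : ℕ :=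
  sSup {m | ∃ x y : V, graphDist adj x y = m}

/-- The tug-of-war operator
`A_f u(x) = (1/2)(max_{y∼x} u(y) + min_{y∼x} u(y)) + f(x)`. -/
noncomputable def Aop {V : Type*} (adj : V → V → Prop) (f u : V → ℝ) (x : V) : ℝ :=
  (sSup (u '' {y | adj x y}) + sInf (u '' {y | adj x y})) / 2 + f x

section

variable {V : Type*} {adj : V → V → Prop}

theorem le_pow_mul_of_reachesIn {g : V → ℝ} {a : ℝ} (ha : 0 ≤ a)
    (hstep : ∀ x z, adj x z → g z ≤ a * g x) :
    ∀ {n : ℕ} {x y : V}, ReachesIn adj n x y → g y ≤ a ^ n * g x := by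
  intro n
  induction n with
  | zero => rintro x y rfl; simp
  | succ n ih =>
    rintro x y ⟨z, hxz, hzy⟩
    calc g y ≤ a ^ n * g z := ih hzy
      _ ≤ a ^ n * (a * g x) := mul_le_mul_of_nonneg_left (hstep x z hxz) (pow_nonneg ha n)
      _ = a ^ (n + 1) * g x := by ring

theorem reachesIn_graphDist (hconn : ∀ x y : V, ∃ n : ℕ, ReachesIn adj n x y) (x y : V) :
    ReachesIn adj (graphDist adj x y) x y :=
  Nat.sInf_mem (hconn x y)

theorem graphDist_le_graphDiam [Finite V] (adj : V → V → Prop) (x y : V) :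
    graphDist adj x y ≤ graphDiam adj := by
  refine le_csSup (Set.Finite.bddAbove ?_) ⟨x, y, rfl⟩
  refine (Set.finite_range fun p : V × V => graphDist adj p.1 p.2).subset ?_
  rintro m ⟨a, b, rfl⟩
  exact ⟨(a, b), rfl⟩

theorem Aop_le_of_adj [Finite V] (f : V → ℝ) {u : V → ℝ} {M : ℝ} (hM : ∀ y, u y ≤ M)
    {x z : V} (hxz : adj x z) : Aop adj f u x ≤ (M + u z) / 2 + f x := by
  have hsup : sSup (u '' {y | adj x y}) ≤ M :=
    csSup_le ⟨u z, z, hxz, rfl⟩ (by rintro _ ⟨y, -, rfl⟩; exact hM y)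
  have hinf : sInf (u '' {y | adj x y}) ≤ u z :=
    csInf_le (Set.toFinite _).bddBelow ⟨z, hxz, rfl⟩
  unfold Aop
  linarith

end

theorem oscillation_bound_via_operator_general {V : Type*} [Fintype V]
    (adj : V → V → Prop)
    (hconn : ∀ x y : V, ∃ n : ℕ, ReachesIn adj n x y) (f u : V → ℝ) :
    (⨆ x : V, u x) - (⨅ x : V, u x) ≤
      2 ^ (graphDiam adj + 1) *
        ((⨆ x : V, |f x|) + (⨆ x : V, |Aop adj f u x - u x|)) := by
  rcases isEmpty_or_nonempty V with hV | hV
  · simp [Real.iSup_of_isEmpty, Real.iInf_of_isEmpty]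
  obtain ⟨x₀, hx₀⟩ := Finite.exists_max u
  set ε := (⨆ x : V, |f x|) + ⨆ x : V, |Aop adj f u x - u x|
  have hε_ge (x : V) : |f x| + |Aop adj f u x - u x| ≤ ε :=
    add_le_add (le_ciSup (Finite.bddAbove_range fun x => |f x|) x)
      (le_ciSup (Finite.bddAbove_range fun x => |Aop adj f u x - u x|) x)
  have hε : 0 ≤ ε := (add_nonneg (abs_nonneg _) (abs_nonneg _)).trans (hε_ge x₀)
  have hstep : ∀ x z, adj x z → u x₀ - u z + 2 * ε ≤ 2 * (u x₀ - u x + 2 * ε) := by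
    intro x z hxz
    linarith [Aop_le_of_adj f hx₀ hxz, hε_ge x, le_abs_self (f x),
      neg_abs_le (Aop adj f u x - u x)]
  have hbound (y : V) : u x₀ - u y ≤ 2 ^ (graphDiam adj + 1) * ε := by
    have hwalk := le_pow_mul_of_reachesIn zero_le_two hstep (reachesIn_graphDist hconn x₀ y)
    have hdiam : (2 : ℝ) ^ graphDist adj x₀ y ≤ 2 ^ graphDiam adj :=
      pow_le_pow_right₀ one_le_two (graphDist_le_graphDiam adj x₀ y)
    have hscaled := mul_le_mul_of_nonneg_right hdiam (by positivity : (0 : ℝ) ≤ 2 * ε)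
    rw [pow_succ]
    linarith
  have hsup : ⨆ x, u x ≤ u x₀ := ciSup_le hx₀
  have hinf : u x₀ - 2 ^ (graphDiam adj + 1) * ε ≤ ⨅ x, u x :=
    le_ciInf fun y => by linarith [hbound y]
  linarith

/-- On a finite connected graph (loops allowed),
`max u − min u ≤ 2^{diam(G)+1}·(‖f‖ + ‖A_f u − u‖)`. -/
theorem oscillation_bound_via_operator {V : Type*} [Fintype V]
    (adj : V → V → Prop) (hsymm : Symmetric adj)
    (hconn : ∀ x y : V, ∃ n : ℕ, ReachesIn adj n x y) (f u : V → ℝ) :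
    (⨆ x : V, u x) - (⨅ x : V, u x) ≤
      2 ^ (graphDiam adj + 1) *
        ((⨆ x : V, |f x|) + (⨆ x : V, |Aop adj f u x - u x|)) :=
  oscillation_bound_via_operator_general adj hconn f u
end
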